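/- For every quantum channel Φ, the trace norm contraction coefficient satisfies η_tr(Φ) = sup { (1/2)‖Φ(ρ) − Φ(σ)‖₁ : ρ, σ density matrices with orthogonal supports (ρσ = 0) }, and moreover this supremum is already attained over pure states: η_tr(Φ) = sup { (1/2)‖Φ(uuᴴ) − Φ(vvᴴ)‖₁ : u, v unit vectors in ℂ^{d_A} with ⟨u,v⟩ = 0 }. -/

import Mathlib

open Matrix Kronecker BigOperators
open scoped ComplexOrder

noncomputable section

/-- The positive semidefinite square root of a positive semidefinite matrix
(the definition `Matrix.PosSemidef.sqrt` of the older Mathlib, since removed). -/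
def Matrix.PosSemidef.sqrt {n : Type*} [Fintype n] {𝕜 : Type*} [RCLike 𝕜] [DecidableEq n]
    {A : Matrix n n 𝕜} (hA : A.PosSemidef) : Matrix n n 𝕜 :=
  hA.1.eigenvectorUnitary.1 * diagonal ((↑) ∘ (√·) ∘ hA.1.eigenvalues) *
  (star hA.1.eigenvectorUnitary : Matrix n n 𝕜)

/-- The trace norm (sum of singular values) of a complex matrix: `tr √(AᴴA)`. -/
def traceNorm {m n : Type*} [Fintype m] [Fintype n] [DecidableEq n] (A : Matrix m n ℂ) : ℝ :=
  ((Matrix.posSemidef_conjTranspose_mul_self A).sqrt).trace.re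

/-- A density matrix: positive semidefinite with trace one. -/
def IsDensity {n : Type*} [Fintype n] [DecidableEq n] (ρ : Matrix n n ℂ) : Prop :=
  ρ.PosSemidef ∧ ρ.trace = 1

/-- Trace norm contraction coefficient of a map on matrices. -/
def etaTr {dA dB : ℕ} (Φ : Matrix (Fin dA) (Fin dA) ℂ → Matrix (Fin dB) (Fin dB) ℂ) : ℝ :=
  sSup {r : ℝ | ∃ ρ σ : Matrix (Fin dA) (Fin dA) ℂ, IsDensity ρ ∧ IsDensity σ ∧ ρ ≠ σ ∧
    r = traceNorm (Φ ρ - Φ σ) / traceNorm (ρ - σ)}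

/-- Optimal success probability for transmitting one of `k` messages through `Φ`. -/
def Psucc {dA dB : ℕ} (Φ : Matrix (Fin dA) (Fin dA) ℂ → Matrix (Fin dB) (Fin dB) ℂ)
    (k : ℕ) : ℝ :=
  sSup {r : ℝ | ∃ (M : Fin k → Matrix (Fin dB) (Fin dB) ℂ)
      (ρ : Fin k → Matrix (Fin dA) (Fin dA) ℂ),
    (∀ i, (M i).PosSemidef) ∧ (∑ i, M i = 1) ∧ (∀ i, IsDensity (ρ i)) ∧
    r = (1 / (k : ℝ)) * ∑ i, ((M i * Φ (ρ i)).trace).re}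

/-- The Euclidean (ℓ₂) norm of a complex vector. -/
def l2norm {n : Type*} [Fintype n] (v : n → ℂ) : ℝ :=
  Real.sqrt (∑ i, ‖v i‖ ^ 2)

/-- Choi state of a map on matrices: `(1/dA) ∑ᵢⱼ Eᵢⱼ ⊗ Φ(Eᵢⱼ)`. -/
def choi {dA dB : ℕ} (Φ : Matrix (Fin dA) (Fin dA) ℂ → Matrix (Fin dB) (Fin dB) ℂ) :
    Matrix (Fin dA × Fin dB) (Fin dA × Fin dB) ℂ :=
  (dA : ℂ)⁻¹ • ∑ i : Fin dA, ∑ j : Fin dA,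
    (Matrix.single i j (1 : ℂ)) ⊗ₖ (Φ (Matrix.single i j (1 : ℂ)))

/-!
Write `ρ - σ = P - N` with `P = (ρ - σ)⁺` and `N = (ρ - σ)⁻`, positive semidefinite with
`P N = 0`. Since `tr (ρ - σ) = 0`, both have the same trace `t`, and `‖ρ - σ‖₁ = 2t`; hence
`‖Φ ρ - Φ σ‖₁ / ‖ρ - σ‖₁ = ½ ‖Φ (P/t) - Φ (N/t)‖₁` with `P/t`, `N/t` orthogonal density matrices,
and conversely every orthogonal pair has `‖ρ - σ‖₁ = 2`. So the two suprema over density matrices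
are suprema of the same set.

For orthogonal `ρ = ∑ pᵢ uᵢuᵢᴴ` and `σ = ∑ qⱼ vⱼvⱼᴴ` (spectral decompositions), `Φ ρ - Φ σ` is the
convex combination of the `Φ (uᵢuᵢᴴ) - Φ (vⱼvⱼᴴ)` with weights `pᵢ qⱼ`, and `ρ σ = 0` forces
`uᵢ ⊥ vⱼ` whenever `pᵢ qⱼ > 0`. The trace norm is convex on Hermitian matrices, so one of these
pairs of orthogonal pure states does at least as well as `(ρ, σ)`.
-/

open scoped MatrixOrder

lemma Finset.exists_pos_and_sum_mul_le {ι : Type*} (s : Finset ι) {w : ι → ℝ} (g : ι → ℝ)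
    (hw : ∀ i ∈ s, 0 ≤ w i) (hw₁ : ∑ i ∈ s, w i = 1) :
    ∃ i ∈ s, 0 < w i ∧ ∑ j ∈ s, w j * g j ≤ g i := by
  by_contra! h
  set M := ∑ j ∈ s, w j * g j
  obtain ⟨i, hi, hwi⟩ : ∃ i ∈ s, (0 : ℝ) < w i :=
    Finset.exists_lt_of_sum_lt (by simp [hw₁] : ∑ i ∈ s, (0 : ℝ) < ∑ i ∈ s, w i)
  have hlt : M < ∑ j ∈ s, w j * M := by
    refine Finset.sum_lt_sum (fun j hj => ?_) ⟨i, hi, mul_lt_mul_of_pos_left (h i hi hwi) hwi⟩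
    rcases (hw j hj).eq_or_lt with hwj | hwj
    · simp [← hwj]
    · exact mul_le_mul_of_nonneg_left (h j hj hwj).le hwj.le
  rw [← Finset.sum_mul, hw₁, one_mul] at hlt
  exact hlt.false

lemma sum_smul_sub_sum_smul_eq {ι κ R M : Type*} [Fintype ι] [Fintype κ] [CommRing R]
    [AddCommGroup M] [Module R M] {p : ι → R} {q : κ → R} (hp : ∑ i, p i = 1)
    (hq : ∑ j, q j = 1) (x : ι → M) (y : κ → M) :
    ∑ i, p i • x i - ∑ j, q j • y j = ∑ ij : ι × κ, (p ij.1 * q ij.2) • (x ij.1 - y ij.2) := by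
  simp only [Fintype.sum_prod_type, smul_sub, Finset.sum_sub_distrib, mul_smul]
  rw [Finset.sum_comm (f := fun i j => p i • q j • y j)]
  simp only [← Finset.smul_sum, ← Finset.sum_smul, smul_comm (p _), hp, hq, one_smul]

namespace Matrix

variable {m n : Type*} [Fintype m] [Fintype n]

lemma star_dotProduct_eq_zero_of_mul_eq_zero {A B : Matrix n n ℂ} (hA : A.IsHermitian)
    (hAB : A * B = 0) {u v : n → ℂ} {a b : ℝ} (hu : A *ᵥ u = a • u) (hv : B *ᵥ v = b • v)
    (ha : a ≠ 0) (hb : b ≠ 0) : star u ⬝ᵥ v = 0 := by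
  have h : ((a * b : ℝ) : ℂ) * (star u ⬝ᵥ v) = 0 :=
    calc ((a * b : ℝ) : ℂ) * (star u ⬝ᵥ v) = star (A *ᵥ u) ⬝ᵥ (B *ᵥ v) := by
          simp only [hu, hv, star_smul, star_trivial, smul_dotProduct, dotProduct_smul,
            Complex.real_smul, Complex.ofReal_mul]
          ring
      _ = star u ⬝ᵥ ((A * B) *ᵥ v) := by
          rw [star_mulVec, hA.eq, ← dotProduct_mulVec, mulVec_mulVec]
      _ = 0 := by rw [hAB, zero_mulVec, dotProduct_zero]
  exact (mul_eq_zero.mp h).resolve_left (by exact_mod_cast mul_ne_zero ha hb)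

lemma vecMulVec_self_star_mul_eq_zero {u v : n → ℂ} (huv : star u ⬝ᵥ v = 0) :
    vecMulVec u (star u) * vecMulVec v (star v) = 0 := by
  rw [vecMulVec_mul_vecMulVec, huv, zero_smul]
  ext i j
  simp [vecMulVec_apply]

variable [DecidableEq n]

lemma PosSemidef.sqrt_eq_cfcSqrt {A : Matrix n n ℂ} (hA : A.PosSemidef) :
    hA.sqrt = CFC.sqrt A := by
  rw [CFC.sqrt_eq_cfc, cfc_nnreal_eq_real _ A, hA.1.cfc_eq]
  simp only [IsHermitian.cfc, Unitary.conjStarAlgAut_apply, PosSemidef.sqrt]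
  congr 3
  funext i
  simp [Real.coe_sqrt, Real.coe_toNNReal', max_eq_left (hA.eigenvalues_nonneg i)]

lemma traceNorm_eq_of_mul_self_eq {A : Matrix m n ℂ} {S : Matrix n n ℂ} (hS : S.PosSemidef)
    (h : S * S = Aᴴ * A) : traceNorm A = S.trace.re := by
  rw [traceNorm, PosSemidef.sqrt_eq_cfcSqrt, CFC.sqrt_unique h hS.nonneg]

lemma traceNorm_smul (A : Matrix m n ℂ) {c : ℝ} (hc : 0 ≤ c) :
    traceNorm (c • A) = c * traceNorm A := by
  have hA := posSemidef_conjTranspose_mul_self A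
  rw [traceNorm_eq_of_mul_self_eq (S := c • CFC.sqrt (Aᴴ * A))
      ((CFC.sqrt_nonneg _).posSemidef.smul hc),
    traceNorm, hA.sqrt_eq_cfcSqrt, trace_smul, Complex.real_smul, Complex.re_ofReal_mul]
  rw [smul_mul_smul, CFC.sqrt_mul_sqrt_self _ hA.nonneg, conjTranspose_smul, star_trivial,
    Matrix.smul_mul, Matrix.mul_smul, smul_smul]

lemma traceNorm_sub_of_mul_eq_zero {P N : Matrix n n ℂ} (hP : P.PosSemidef) (hN : N.PosSemidef)
    (hPN : P * N = 0) : traceNorm (P - N) = P.trace.re + N.trace.re := by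
  have hNP : N * P = 0 := by
    simpa [hP.1.eq, hN.1.eq] using congrArg conjTranspose hPN
  rw [traceNorm_eq_of_mul_self_eq (hP.add hN), trace_add, Complex.add_re]
  rw [(hP.1.sub hN.1).eq, add_mul, mul_add, mul_add, sub_mul, mul_sub, mul_sub, hPN, hNP]
  abel

lemma IsHermitian.traceNorm_eq {A : Matrix n n ℂ} (hA : A.IsHermitian) :
    traceNorm A = (A⁺).trace.re + (A⁻).trace.re := by
  conv_lhs => rw [← CFC.posPart_sub_negPart A hA]
  exact traceNorm_sub_of_mul_eq_zero (CFC.posPart_nonneg A).posSemidef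
    (CFC.negPart_nonneg A).posSemidef (CFC.posPart_mul_negPart A)

lemma PosSemidef.re_trace_mul_nonneg {P Q : Matrix n n ℂ} (hP : P.PosSemidef)
    (hQ : Q.PosSemidef) : 0 ≤ (P * Q).trace.re := by
  have hR : (CFC.sqrt P)ᴴ = CFC.sqrt P := (CFC.sqrt_nonneg P).posSemidef.1.eq
  have h : (P * Q).trace = (CFC.sqrt P * Q * (CFC.sqrt P)ᴴ).trace := by
    conv_lhs => rw [← CFC.sqrt_mul_sqrt_self P hP.nonneg]
    rw [hR, mul_assoc, trace_mul_comm]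
  rw [h]
  exact (RCLike.nonneg_iff.mp (hQ.mul_mul_conjTranspose_same _).trace_nonneg).1

-- Duality with the operator norm, `‖A‖₁ = max {re tr (W A) : -1 ≤ W ≤ 1}`, gives the triangle
-- inequality.
lemma IsHermitian.re_trace_mul_le_traceNorm {A W : Matrix n n ℂ} (hA : A.IsHermitian)
    (hW₁ : (1 - W).PosSemidef) (hW₂ : (1 + W).PosSemidef) :
    (W * A).trace.re ≤ traceNorm A := by
  have hpos := hW₁.re_trace_mul_nonneg (CFC.posPart_nonneg A).posSemidef
  have hneg := hW₂.re_trace_mul_nonneg (CFC.negPart_nonneg A).posSemidef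
  rw [sub_mul, one_mul, trace_sub, Complex.sub_re] at hpos
  rw [add_mul, one_mul, trace_add, Complex.add_re] at hneg
  conv_lhs => rw [← CFC.posPart_sub_negPart A hA]
  rw [hA.traceNorm_eq, mul_sub, trace_sub, Complex.sub_re]
  linarith

lemma IsHermitian.exists_re_trace_mul_eq_traceNorm {A : Matrix n n ℂ} (hA : A.IsHermitian) :
    ∃ W : Matrix n n ℂ, (1 - W).PosSemidef ∧ (1 + W).PosSemidef ∧
      (W * A).trace.re = traceNorm A := by
  have hcont (f : ℝ → ℝ) : ContinuousOn f (spectrum ℝ A) := finite_real_spectrum.continuousOn _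
  set s : ℝ → ℝ := fun x => if 0 ≤ x then 1 else -1
  have habs : cfc (fun x : ℝ => |x|) A * cfc (fun x : ℝ => |x|) A = Aᴴ * A := by
    rw [← cfc_mul _ _ _ (hcont _) (hcont _), hA.eq]
    simp_rw [abs_mul_abs_self]
    rw [cfc_mul _ _ _ (hcont _) (hcont _), cfc_id' ℝ A]
  refine ⟨cfc s A, ?_, ?_, ?_⟩
  · rw [← cfc_const_one ℝ A, ← cfc_sub _ _ _ (hcont _) (hcont _)]
    refine (cfc_nonneg fun x _ => ?_).posSemidef
    by_cases hx : 0 ≤ x <;> simp [s, hx]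
  · rw [← cfc_const_one ℝ A, ← cfc_add _ _ _ (hcont _) (hcont _)]
    refine (cfc_nonneg fun x _ => ?_).posSemidef
    by_cases hx : 0 ≤ x <;> simp [s, hx]
  · rw [traceNorm_eq_of_mul_self_eq (cfc_nonneg fun x _ => abs_nonneg x).posSemidef habs]
    nth_rw 2 [← cfc_id' ℝ A]
    rw [← cfc_mul _ _ _ (hcont _) (hcont _)]
    congr 3
    funext x
    by_cases hx : 0 ≤ x
    · simp [s, hx, abs_of_nonneg hx]
    · simp [s, hx, abs_of_neg (not_le.mp hx)]

lemma traceNorm_add_le {A B : Matrix n n ℂ} (hA : A.IsHermitian) (hB : B.IsHermitian) :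
    traceNorm (A + B) ≤ traceNorm A + traceNorm B := by
  obtain ⟨W, hW₁, hW₂, hW⟩ := (hA.add hB).exists_re_trace_mul_eq_traceNorm
  rw [← hW, mul_add, trace_add, Complex.add_re]
  exact add_le_add (hA.re_trace_mul_le_traceNorm hW₁ hW₂) (hB.re_trace_mul_le_traceNorm hW₁ hW₂)

lemma traceNorm_sum_smul_le {ι : Type*} (s : Finset ι) {c : ι → ℝ} {f : ι → Matrix n n ℂ}
    (hc : ∀ i ∈ s, 0 ≤ c i) (hf : ∀ i ∈ s, (f i).IsHermitian) :
    traceNorm (∑ i ∈ s, c i • f i) ≤ ∑ i ∈ s, c i * traceNorm (f i) := by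
  classical
  induction s using Finset.induction_on with
  | empty => simp [traceNorm_eq_of_mul_self_eq PosSemidef.zero]
  | insert j s hj ih =>
    simp only [Finset.mem_insert, forall_eq_or_imp] at hc hf
    have hsum : (∑ i ∈ s, c i • f i).IsHermitian :=
      isSelfAdjoint_sum s fun i hi => (hf.2 i hi).smul (IsSelfAdjoint.all (c i))
    rw [Finset.sum_insert hj, Finset.sum_insert hj, ← traceNorm_smul _ hc.1]
    exact (traceNorm_add_le (hf.1.smul (IsSelfAdjoint.all (c j))) hsum).trans
      (add_le_add le_rfl (ih hc.2 hf.2))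

lemma IsHermitian.eq_sum_eigenvalues_smul_vecMulVec {A : Matrix n n ℂ} (hA : A.IsHermitian) :
    A = ∑ i, hA.eigenvalues i •
      vecMulVec ⇑(hA.eigenvectorBasis i) (star ⇑(hA.eigenvectorBasis i)) := by
  conv_lhs => rw [hA.spectral_theorem]
  ext a b
  rw [Unitary.conjStarAlgAut_apply, mul_apply]
  simp only [mul_diagonal, sum_apply, smul_apply, vecMulVec_apply, star_apply,
    IsHermitian.eigenvectorUnitary_apply, Pi.star_apply, Function.comp_apply, Complex.real_smul,
    RCLike.star_def, RCLike.ofReal_eq_complex_ofReal]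
  exact Finset.sum_congr rfl fun i _ => by ring

end Matrix

lemma l2norm_ofLp {n : Type*} [Fintype n] (x : EuclideanSpace ℂ n) : l2norm x.ofLp = ‖x‖ :=
  (EuclideanSpace.norm_eq x).symm

section Density

variable {m n : Type*} [Fintype m] [Fintype n] [DecidableEq m] [DecidableEq n]

lemma IsDensity.sum_eigenvalues {ρ : Matrix n n ℂ} (hρ : IsDensity ρ) :
    ∑ i, hρ.1.1.eigenvalues i = 1 := by
  have h := hρ.2
  rw [hρ.1.1.trace_eq_sum_eigenvalues] at h
  exact Complex.ofReal_eq_one.mp (by push_cast; exact h)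

lemma isDensity_vecMulVec_self_star {u : n → ℂ} (hu : l2norm u = 1) :
    IsDensity (vecMulVec u (star u)) := by
  refine ⟨posSemidef_vecMulVec_self_star u, ?_⟩
  have h := inner_self_eq_norm_sq_to_K (𝕜 := ℂ) (WithLp.toLp 2 u)
  rw [EuclideanSpace.inner_eq_star_dotProduct, ← l2norm_ofLp] at h
  rw [trace_vecMulVec]
  simpa [hu] using h

lemma IsDensity.ne_of_mul_eq_zero {ρ σ : Matrix n n ℂ} (hρ : IsDensity ρ) (hρσ : ρ * σ = 0) :
    ρ ≠ σ := by
  rintro rfl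
  have h0 : ρ = 0 := conjTranspose_mul_self_eq_zero.mp (by rwa [hρ.1.1.eq])
  simpa [h0] using hρ.2

lemma IsDensity.traceNorm_sub_eq_two {ρ σ : Matrix n n ℂ} (hρ : IsDensity ρ)
    (hσ : IsDensity σ) (hρσ : ρ * σ = 0) : traceNorm (ρ - σ) = 2 := by
  rw [traceNorm_sub_of_mul_eq_zero hρ.1 hσ.1 hρσ, hρ.2, hσ.2]
  norm_num

lemma exists_orthogonal_eq_ratio_of_ne (Φ : Matrix n n ℂ →ₗ[ℂ] Matrix m m ℂ) {ρ σ : Matrix n n ℂ}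
    (hρ : IsDensity ρ) (hσ : IsDensity σ) (hne : ρ ≠ σ) :
    ∃ ρ' σ' : Matrix n n ℂ, IsDensity ρ' ∧ IsDensity σ' ∧ ρ' * σ' = 0 ∧
      traceNorm (Φ ρ - Φ σ) / traceNorm (ρ - σ) = 1 / 2 * traceNorm (Φ ρ' - Φ σ') := by
  set A := ρ - σ
  have hA : A.IsHermitian := hρ.1.1.sub hσ.1.1
  have hP : (A⁺).PosSemidef := (CFC.posPart_nonneg A).posSemidef
  have hN : (A⁻).PosSemidef := (CFC.negPart_nonneg A).posSemidef
  set t := (A⁺).trace.re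
  have hPt : (A⁺).trace = t :=
    Complex.eq_re_of_ofReal_le (r := 0) (by rw [Complex.ofReal_zero]; exact hP.trace_nonneg)
  have hNt : (A⁻).trace = t := by
    have h : (A⁺ - A⁻).trace = 0 := by
      rw [CFC.posPart_sub_negPart A hA, trace_sub, hρ.2, hσ.2, sub_self]
    rw [trace_sub, sub_eq_zero] at h
    rw [← h, hPt]
  have ht : 0 < t := by
    refine (Complex.zero_le_real.mp (hPt ▸ hP.trace_nonneg)).lt_of_ne fun ht => hne ?_
    have hP0 : A⁺ = 0 := hP.trace_eq_zero_iff.mp (by rw [hPt, ← ht, Complex.ofReal_zero])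
    have hN0 : A⁻ = 0 := hN.trace_eq_zero_iff.mp (by rw [hNt, ← ht, Complex.ofReal_zero])
    rw [← sub_eq_zero]
    change A = 0
    rw [← CFC.posPart_sub_negPart A hA, hP0, hN0, sub_zero]
  have hdens {B : Matrix n n ℂ} (hB : B.PosSemidef) (hBt : B.trace = t) :
      IsDensity (t⁻¹ • B) := by
    refine ⟨hB.smul (inv_nonneg.mpr ht.le), ?_⟩
    rw [trace_smul, hBt, Complex.real_smul, Complex.ofReal_inv, inv_mul_cancel₀]
    exact_mod_cast ht.ne'
  refine ⟨t⁻¹ • A⁺, t⁻¹ • A⁻, hdens hP hPt, hdens hN hNt, ?_, ?_⟩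
  · rw [smul_mul_smul, CFC.posPart_mul_negPart, smul_zero]
  · have hΦA : Φ ρ - Φ σ = t • (Φ (t⁻¹ • A⁺) - Φ (t⁻¹ • A⁻)) := by
      rw [← map_sub, ← map_sub, ← smul_sub, LinearMap.map_smul_of_tower, smul_inv_smul₀ ht.ne',
        CFC.posPart_sub_negPart A hA]
    rw [hΦA, traceNorm_smul _ ht.le, hA.traceNorm_eq, hPt, hNt, Complex.ofReal_re]
    field_simp
    ring

lemma exists_orthogonal_pure_le_of_mul_eq_zero (Φ : Matrix n n ℂ →ₗ[ℂ] Matrix m m ℂ)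
    (hΦ : ∀ x, x.IsHermitian → (Φ x).IsHermitian) {ρ σ : Matrix n n ℂ}
    (hρ : IsDensity ρ) (hσ : IsDensity σ) (hρσ : ρ * σ = 0) :
    ∃ u v : n → ℂ, l2norm u = 1 ∧ l2norm v = 1 ∧ star u ⬝ᵥ v = 0 ∧
      traceNorm (Φ ρ - Φ σ) ≤
        traceNorm (Φ (vecMulVec u (star u)) - Φ (vecMulVec v (star v))) := by
  set u := hρ.1.1.eigenvectorBasis
  set v := hσ.1.1.eigenvectorBasis
  set p := hρ.1.1.eigenvalues
  set q := hσ.1.1.eigenvalues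
  set D : n × n → Matrix m m ℂ := fun ij =>
    Φ (vecMulVec ⇑(u ij.1) (star ⇑(u ij.1))) - Φ (vecMulVec ⇑(v ij.2) (star ⇑(v ij.2)))
  have hD (ij : n × n) : (D ij).IsHermitian :=
    (hΦ _ (posSemidef_vecMulVec_self_star _).1).sub (hΦ _ (posSemidef_vecMulVec_self_star _).1)
  have hdecomp : Φ ρ - Φ σ = ∑ ij : n × n, (p ij.1 * q ij.2) • D ij := by
    rw [hρ.1.1.eq_sum_eigenvalues_smul_vecMulVec, hσ.1.1.eq_sum_eigenvalues_smul_vecMulVec,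
      map_sum, map_sum]
    simp only [LinearMap.map_smul_of_tower]
    exact sum_smul_sub_sum_smul_eq hρ.sum_eigenvalues hσ.sum_eigenvalues _ _
  have hw (ij : n × n) : 0 ≤ p ij.1 * q ij.2 :=
    mul_nonneg (hρ.1.eigenvalues_nonneg _) (hσ.1.eigenvalues_nonneg _)
  have hw₁ : ∑ ij : n × n, p ij.1 * q ij.2 = 1 := by
    rw [Fintype.sum_prod_type, ← Fintype.sum_mul_sum, hρ.sum_eigenvalues, hσ.sum_eigenvalues,
      one_mul]
  obtain ⟨⟨i, j⟩, -, hpos, hle⟩ := Finset.univ.exists_pos_and_sum_mul_le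
    (fun ij => traceNorm (D ij)) (fun ij _ => hw ij) hw₁
  refine ⟨u i, v j, by rw [l2norm_ofLp, u.norm_eq_one], by rw [l2norm_ofLp, v.norm_eq_one], ?_,
    ?_⟩
  · exact star_dotProduct_eq_zero_of_mul_eq_zero hρ.1.1 hρσ (hρ.1.1.mulVec_eigenvectorBasis i)
      (hσ.1.1.mulVec_eigenvectorBasis j) (left_ne_zero_of_mul hpos.ne')
      (right_ne_zero_of_mul hpos.ne')
  · rw [hdecomp]
    exact (traceNorm_sum_smul_le _ (fun ij _ => hw ij) fun ij _ => hD ij).trans hle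

end Density

def krausMap {ι m n : Type*} [Fintype ι] [Fintype n] (K : ι → Matrix m n ℂ) :
    Matrix n n ℂ →ₗ[ℂ] Matrix m m ℂ where
  toFun x := ∑ i, K i * x * (K i)ᴴ
  map_add' x y := by simp only [Matrix.mul_add, Matrix.add_mul, Finset.sum_add_distrib]
  map_smul' c x := by
    simp only [Matrix.mul_smul, Matrix.smul_mul, Finset.smul_sum, RingHom.id_apply]

lemma isHermitian_krausMap {ι m n : Type*} [Fintype ι] [Fintype n] (K : ι → Matrix m n ℂ)
    {x : Matrix n n ℂ} (hx : x.IsHermitian) : (krausMap K x).IsHermitian :=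
  isSelfAdjoint_sum _ fun i _ => isHermitian_mul_mul_conjTranspose (K i) hx

lemma etaTr_eq_sSup_orthogonal {dA dB : ℕ}
    (Φ : Matrix (Fin dA) (Fin dA) ℂ →ₗ[ℂ] Matrix (Fin dB) (Fin dB) ℂ) :
    etaTr Φ = sSup {r : ℝ | ∃ ρ σ : Matrix (Fin dA) (Fin dA) ℂ,
        IsDensity ρ ∧ IsDensity σ ∧ ρ * σ = 0 ∧ r = (1 / 2) * traceNorm (Φ ρ - Φ σ)} := by
  rw [etaTr]
  congr 1
  ext r
  constructor
  · rintro ⟨ρ, σ, hρ, hσ, hne, rfl⟩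
    obtain ⟨ρ', σ', hρ', hσ', hρσ', h⟩ := exists_orthogonal_eq_ratio_of_ne Φ hρ hσ hne
    exact ⟨ρ', σ', hρ', hσ', hρσ', h⟩
  · rintro ⟨ρ, σ, hρ, hσ, hρσ, rfl⟩
    refine ⟨ρ, σ, hρ, hσ, hρ.ne_of_mul_eq_zero hρσ, ?_⟩
    rw [hρ.traceNorm_sub_eq_two hσ hρσ]
    ring

lemma sSup_orthogonal_eq_sSup_pure {m n : Type*} [Fintype m] [Fintype n] [DecidableEq m]
    [DecidableEq n] (Φ : Matrix n n ℂ →ₗ[ℂ] Matrix m m ℂ)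
    (hΦ : ∀ x, x.IsHermitian → (Φ x).IsHermitian) :
    sSup {r : ℝ | ∃ ρ σ : Matrix n n ℂ,
        IsDensity ρ ∧ IsDensity σ ∧ ρ * σ = 0 ∧ r = (1 / 2) * traceNorm (Φ ρ - Φ σ)} =
    sSup {r : ℝ | ∃ u v : n → ℂ, l2norm u = 1 ∧ l2norm v = 1 ∧ star u ⬝ᵥ v = 0 ∧
        r = (1 / 2) * traceNorm (Φ (vecMulVec u (star u)) - Φ (vecMulVec v (star v)))} := by
  refine csSup_eq_csSup_of_forall_exists_le ?_ ?_
  · rintro r ⟨ρ, σ, hρ, hσ, hρσ, rfl⟩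
    obtain ⟨u, v, hu, hv, huv, hle⟩ := exists_orthogonal_pure_le_of_mul_eq_zero Φ hΦ hρ hσ hρσ
    exact ⟨_, ⟨u, v, hu, hv, huv, rfl⟩, by gcongr⟩
  · rintro r ⟨u, v, hu, hv, huv, rfl⟩
    exact ⟨_, ⟨_, _, isDensity_vecMulVec_self_star hu, isDensity_vecMulVec_self_star hv,
      vecMulVec_self_star_mul_eq_zero huv, rfl⟩, le_rfl⟩

theorem etaTr_eq_sup_orthogonal_general {dA dB : ℕ} {ι : Type} [Fintype ι]
    (K : ι → Matrix (Fin dB) (Fin dA) ℂ)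
    (Φ : Matrix (Fin dA) (Fin dA) ℂ → Matrix (Fin dB) (Fin dB) ℂ)
    (hΦ : ∀ x, Φ x = ∑ i, K i * x * (K i)ᴴ) :
    etaTr Φ = sSup {r : ℝ | ∃ ρ σ : Matrix (Fin dA) (Fin dA) ℂ,
        IsDensity ρ ∧ IsDensity σ ∧ ρ * σ = 0 ∧
        r = (1 / 2) * traceNorm (Φ ρ - Φ σ)} ∧
    etaTr Φ = sSup {r : ℝ | ∃ u v : Fin dA → ℂ,
        l2norm u = 1 ∧ l2norm v = 1 ∧ star u ⬝ᵥ v = 0 ∧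
        r = (1 / 2) * traceNorm
          (Φ (Matrix.vecMulVec u (star u)) - Φ (Matrix.vecMulVec v (star v)))} := by
  obtain rfl : Φ = krausMap K := funext hΦ
  have h := etaTr_eq_sSup_orthogonal (krausMap K)
  exact ⟨h, h.trans (sSup_orthogonal_eq_sSup_pure _ fun _ => isHermitian_krausMap K)⟩

/-- the contraction coefficient is attained on orthogonal density matrices,
and moreover on orthogonal pure states. -/
theorem etaTr_eq_sup_orthogonal {dA dB : ℕ} {ι : Type} [Fintype ι]
    (K : ι → Matrix (Fin dB) (Fin dA) ℂ)
    (hK : ∑ i, (K i)ᴴ * K i = 1)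
    (Φ : Matrix (Fin dA) (Fin dA) ℂ → Matrix (Fin dB) (Fin dB) ℂ)
    (hΦ : ∀ x, Φ x = ∑ i, K i * x * (K i)ᴴ) :
    etaTr Φ = sSup {r : ℝ | ∃ ρ σ : Matrix (Fin dA) (Fin dA) ℂ,
        IsDensity ρ ∧ IsDensity σ ∧ ρ * σ = 0 ∧
        r = (1 / 2) * traceNorm (Φ ρ - Φ σ)} ∧
    etaTr Φ = sSup {r : ℝ | ∃ u v : Fin dA → ℂ,
        l2norm u = 1 ∧ l2norm v = 1 ∧ star u ⬝ᵥ v = 0 ∧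
        r = (1 / 2) * traceNorm
          (Φ (Matrix.vecMulVec u (star u)) - Φ (Matrix.vecMulVec v (star v)))} :=
  etaTr_eq_sup_orthogonal_general K Φ hΦ
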